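/- arXiv:1711.03382 — 2 statements merged into one kernel-verified Lean document; each statement's English description precedes it below -/
import Mathlib

section
/- Let r ≥ 3, 1 ≤ k ≤ r, and suppose 2k − r − 2 ≥ 0. Then setting k_1 = k, k_2 = k−1, k_3 = 2k−r−2, x = 2(r+1−k)(2(r−k)^2 + kr + 5r − 4k + 2)/(r(r−1)(r+2−k)), y = 2k(3r−2k+2)/(r(r−1)), and z = 2k(k−1)/(r(r−1)(r+2−k)) gives non-negative x, y, z satisfying the three equations: (1/2)k_1(k_1−1)x + (1/2)k_2(k_2−1)y + (1/2)k_3(k_3−1)z = k(2k−2); k_1(r−k_1)x + k_2(r−k_2)y + k_3(r−k_3)z = 2k(2r+2−2k); and (1/2)(r−k_1)(r−k_1−1)x + (1/2)(r−k_2)(r−k_2−1)y + (1/2)(r−k_3)(r−k_3−1)z = (r+1−k)(2r+1−2k). -/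
theorem stmt13 (r k : ℕ) (hr : 3 ≤ r) (hk1 : 1 ≤ k) (hk2 : k ≤ r)
    (hcond : r + 2 ≤ 2 * k) :
    let R : ℝ := r
    let K : ℝ := k
    let k1 : ℝ := K
    let k2 : ℝ := K - 1
    let k3 : ℝ := 2 * K - R - 2
    let x : ℝ := 2 * (R + 1 - K) * (2 * (R - K) ^ 2 + K * R + 5 * R - 4 * K + 2) /
      (R * (R - 1) * (R + 2 - K))
    let y : ℝ := 2 * K * (3 * R - 2 * K + 2) / (R * (R - 1))
    let z : ℝ := 2 * K * (K - 1) / (R * (R - 1) * (R + 2 - K))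
    0 ≤ x ∧ 0 ≤ y ∧ 0 ≤ z ∧
    (1 / 2) * k1 * (k1 - 1) * x + (1 / 2) * k2 * (k2 - 1) * y + (1 / 2) * k3 * (k3 - 1) * z
      = K * (2 * K - 2) ∧
    k1 * (R - k1) * x + k2 * (R - k2) * y + k3 * (R - k3) * z = 2 * K * (2 * R + 2 - 2 * K) ∧
    (1 / 2) * (R - k1) * (R - k1 - 1) * x + (1 / 2) * (R - k2) * (R - k2 - 1) * y +
      (1 / 2) * (R - k3) * (R - k3 - 1) * z = (R + 1 - K) * (2 * R + 1 - 2 * K) := by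
  intro R K k1 k2 k3 x y z
  have hR3 : (3 : ℝ) ≤ R := by show (3:ℝ) ≤ (r:ℝ); exact_mod_cast hr
  have hK1 : (1 : ℝ) ≤ K := by show (1:ℝ) ≤ (k:ℝ); exact_mod_cast hk1
  have hKR : K ≤ R := by show (k:ℝ) ≤ (r:ℝ); exact_mod_cast hk2
  have hRpos : (0 : ℝ) < R := by linarith
  have hR1 : (0 : ℝ) < R - 1 := by linarith
  have hRK : (0 : ℝ) < R + 2 - K := by linarith
  have hRK1 : (0 : ℝ) ≤ R + 1 - K := by linarith
  have hnum : (0 : ℝ) ≤ 2 * (R - K) ^ 2 + K * R + 5 * R - 4 * K + 2 := by nlinarith [sq_nonneg (R - K)]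
  refine ⟨?_, ?_, ?_, ?_, ?_, ?_⟩
  · exact div_nonneg (by nlinarith) (by positivity)
  · exact div_nonneg (by nlinarith) (by positivity)
  · exact div_nonneg (by nlinarith) (by positivity)
  · show (1 / 2) * k1 * (k1 - 1) * x + (1 / 2) * k2 * (k2 - 1) * y + (1 / 2) * k3 * (k3 - 1) * z = K * (2 * K - 2)
    simp only [x, y, z, k1, k2, k3]
    field_simp
    ring
  · show k1 * (R - k1) * x + k2 * (R - k2) * y + k3 * (R - k3) * z = 2 * K * (2 * R + 2 - 2 * K)
    simp only [x, y, z, k1, k2, k3]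
    field_simp
    ring
  · show (1 / 2) * (R - k1) * (R - k1 - 1) * x + (1 / 2) * (R - k2) * (R - k2 - 1) * y +
      (1 / 2) * (R - k3) * (R - k3 - 1) * z = (R + 1 - K) * (2 * R + 1 - 2 * K)
    simp only [x, y, z, k1, k2, k3]
    field_simp
    ring
end

section
/- The edge set of the complement of the cycle C_n (n ≥ 5) can be partitioned into graphs each of which is the complete graph on n vertices minus two matchings; consequently, for r ≥ 3 and n ≥ 4r+6, any graph H on n vertices whose complement is a (subgraph of a) Hamilton cycle has a fractional K_r-decomposition. -/
open Finset
open scoped Classical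

noncomputable def fracCliqueDecomp {V : Type*} [Fintype V] (G : SimpleGraph V) (r : ℕ) : Prop :=
  ∃ w : Finset V → ℝ, (∀ s, 0 ≤ w s) ∧
    ∀ u v : V, G.Adj u v →
      ∑ s ∈ univ.filter (fun s : Finset V => G.IsNClique r s ∧ u ∈ s ∧ v ∈ s), w s = 1

/-!
The complement of `H` is covered by two matchings `M₁, M₂ ≤ Hᶜ`: colour each cycle edge
`{e i, e (i + 1)}` by the parity of `i`. For odd `n` this fails at `e 0` only, so there one
first averages over the `n` ways of deleting a vertex and rotates the deleted vertex to `e 0`.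

Given a matching `M ≤ Hᶜ` inside `A`, there is a random `M`-independent set `B ⊆ A` with
`#A ≤ 2 #B + 2` that contains each vertex with probability `1 / 2` and each `M`-independent pair
with probability `1 / 4`: choose one end of every `M`-edge uniformly, and a mixture of uniform
random subsets of suitable sizes of the remaining vertices. Every edge of `H[A]` is such a pair,
so fractional decompositions of the sets `B`, weighted by `4 P(B)`, add up to one of `H[A]`.
Doing this for `M₁` and then for `M₂` leaves sets of size at least `(n - 6) / 4 ≥ r` that are
cliques of `H`, and a clique is decomposed by equal weights on its `r`-subsets.
-/

universe u

theorem Finset.card_filter_powersetCard_subset_mul {α : Type*} {s t : Finset α} (hst : s ⊆ t)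
    (k : ℕ) :
    #{B ∈ t.powersetCard k | s ⊆ B} * (#t).choose #s = (#t).choose k * k.choose #s := by
  rcases le_or_gt #s k with hsk | hks
  · rw [card_filter_powersetCard_subset s t k hst hsk, mul_comm, Nat.choose_mul hsk]
  · rw [Nat.choose_eq_zero_of_lt hks, mul_zero, mul_eq_zero, card_eq_zero, filter_eq_empty_iff]
    exact Or.inl fun B hB hsB => by
      have := card_le_card hsB
      rw [(mem_powersetCard.1 hB).2] at this
      omega

theorem Fin.val_add_one_mod_two_ne {n : ℕ} [NeZero n] {i : Fin n}
    (h : Even n ∨ i + 1 ≠ 0) : (i + 1 : Fin n).val % 2 ≠ i.val % 2 := by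
  rcases Nat.lt_or_ge (i.val + 1) n with hlt | hge
  · rw [Fin.val_add_one_of_lt' hlt]
    omega
  have hi0 : i + 1 = 0 := by
    ext
    rw [Fin.val_add, Fin.val_one', Nat.add_mod_mod, show i.val + 1 = n by omega, Nat.mod_self,
      Fin.val_zero]
  obtain ⟨m, hm⟩ := h.resolve_right (not_not.2 hi0)
  rw [hi0, Fin.val_zero]
  omega

namespace SimpleGraph

variable {V : Type u}

section Decomposition

variable [Fintype V]

noncomputable def cliqueWeight (H : SimpleGraph V) (r : ℕ) (w : Finset V → ℝ) (u v : V) : ℝ :=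
  ∑ s with H.IsNClique r s ∧ u ∈ s ∧ v ∈ s, w s

/-- `w` is a fractional `K_r`-decomposition of the induced subgraph `H[A]`. -/
structure IsFracCliqueDecompOn (H : SimpleGraph V) (r : ℕ) (A : Finset V)
    (w : Finset V → ℝ) : Prop where
  nonneg : ∀ s, 0 ≤ w s
  subset_of_ne_zero : ∀ s, w s ≠ 0 → s ⊆ A
  cliqueWeight_eq_one : ∀ u ∈ A, ∀ v ∈ A, H.Adj u v → H.cliqueWeight r w u v = 1

variable {H : SimpleGraph V} {r : ℕ}

lemma IsFracCliqueDecompOn.cliqueWeight_eq_zero {A : Finset V} {w : Finset V → ℝ}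
    (hw : H.IsFracCliqueDecompOn r A w) {u v : V} (huv : ¬(u ∈ A ∧ v ∈ A)) :
    H.cliqueWeight r w u v = 0 := by
  refine sum_eq_zero fun s hs => ?_
  by_contra hws
  have hsA := hw.subset_of_ne_zero s hws
  simp only [mem_filter] at hs
  exact huv ⟨hsA hs.2.2.1, hsA hs.2.2.2⟩

lemma exists_isFracCliqueDecompOn_of_isClique {A : Finset V} (hA : H.IsClique (A : Set V))
    (hr : 2 ≤ r) (hrA : r ≤ #A) : ∃ w, H.IsFracCliqueDecompOn r A w := by
  refine ⟨fun s => if s ∈ A.powersetCard r then ((#A - 2).choose (r - 2) : ℝ)⁻¹ else 0,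
    ⟨fun s => by positivity, fun s hs => ?_, fun u hu v hv huv => ?_⟩⟩
  · by_contra hsA
    exact hs (if_neg fun h => hsA (mem_powersetCard.1 h).1)
  have hcliques : (univ.filter fun s => H.IsNClique r s ∧ u ∈ s ∧ v ∈ s) ∩ A.powersetCard r =
      {s ∈ A.powersetCard r | {u, v} ⊆ s} := by
    ext s
    simp only [mem_inter, mem_filter, mem_univ, true_and, mem_powersetCard, insert_subset_iff,
      singleton_subset_iff, isNClique_iff]
    exact ⟨fun h => ⟨h.2, h.1.2⟩, fun h => ⟨⟨⟨hA.subset h.1.1, h.1.2⟩, h.2⟩, h.1⟩⟩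
  have hchoose : ((#A - 2).choose (r - 2) : ℝ) ≠ 0 := by
    exact_mod_cast (Nat.choose_pos (by omega)).ne'
  rw [cliqueWeight, sum_ite_mem, hcliques, sum_const, nsmul_eq_mul,
    card_filter_powersetCard_subset _ _ _ (insert_subset hu (singleton_subset_iff.2 hv))
      (by rw [card_pair huv.ne]; omega), card_pair huv.ne]
  exact mul_inv_cancel₀ hchoose

lemma exists_isFracCliqueDecompOn_of_average {ι : Type*} {A : Finset V} (I : Finset ι) (c : ι → ℝ)
    (S : ι → Finset V) (hc : ∀ i ∈ I, 0 ≤ c i)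
    (hS : ∀ i ∈ I, c i ≠ 0 → S i ⊆ A ∧ ∃ w, H.IsFracCliqueDecompOn r (S i) w)
    (hcover : ∀ u ∈ A, ∀ v ∈ A, H.Adj u v → ∑ i ∈ I with u ∈ S i ∧ v ∈ S i, c i = 1) :
    ∃ w, H.IsFracCliqueDecompOn r A w := by
  have hW : ∀ i, ∃ w : Finset V → ℝ, i ∈ I → c i ≠ 0 → H.IsFracCliqueDecompOn r (S i) w := by
    intro i
    by_cases h : i ∈ I ∧ c i ≠ 0
    · obtain ⟨w, hw⟩ := (hS i h.1 h.2).2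
      exact ⟨w, fun _ _ => hw⟩
    · exact ⟨0, fun hi hci => absurd ⟨hi, hci⟩ h⟩
  choose W hW using hW
  refine ⟨fun s => ∑ i ∈ I, c i * W i s,
    ⟨fun s => sum_nonneg fun i hi => ?_, fun s hs => ?_, fun u hu v hv huv => ?_⟩⟩
  · rcases eq_or_ne (c i) 0 with h | h
    · simp [h]
    · exact mul_nonneg (hc i hi) ((hW i hi h).nonneg s)
  · obtain ⟨i, hi, hne⟩ := exists_ne_zero_of_sum_ne_zero hs
    have hci : c i ≠ 0 := left_ne_zero_of_mul hne
    exact ((hW i hi hci).subset_of_ne_zero s (right_ne_zero_of_mul hne)).trans (hS i hi hci).1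
  have hterm : ∀ i ∈ I, c i * H.cliqueWeight r (W i) u v =
      if u ∈ S i ∧ v ∈ S i then c i else 0 := by
    intro i hi
    rcases eq_or_ne (c i) 0 with h | h
    · simp [h]
    split_ifs with huvS
    · rw [(hW i hi h).cliqueWeight_eq_one u huvS.1 v huvS.2 huv, mul_one]
    · rw [(hW i hi h).cliqueWeight_eq_zero huvS, mul_zero]
  calc H.cliqueWeight r (fun s => ∑ i ∈ I, c i * W i s) u v
      = ∑ i ∈ I, c i * H.cliqueWeight r (W i) u v := by
        simp only [cliqueWeight, mul_sum]
        exact sum_comm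
    _ = ∑ i ∈ I with u ∈ S i ∧ v ∈ S i, c i := by
        rw [sum_filter]
        exact sum_congr rfl hterm
    _ = 1 := hcover u hu v hv huv

lemma exists_isFracCliqueDecompOn_of_forall_erase {A : Finset V} (hA : 3 ≤ #A)
    (h : ∀ v ∈ A, ∃ w, H.IsFracCliqueDecompOn r (A.erase v) w) :
    ∃ w, H.IsFracCliqueDecompOn r A w := by
  have hA' : (3 : ℝ) ≤ #A := by exact_mod_cast hA
  refine exists_isFracCliqueDecompOn_of_average A (fun _ => ((#A : ℝ) - 2)⁻¹) A.erase
    (fun _ _ => inv_nonneg.2 (by linarith)) (fun v hv _ => ⟨erase_subset v A, h v hv⟩)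
    fun u hu v hv huv => ?_
  have hfilter : {x ∈ A | u ∈ A.erase x ∧ v ∈ A.erase x} = (A.erase u).erase v := by
    ext x
    simp only [mem_filter, mem_erase]
    constructor
    · rintro ⟨hx, ⟨hux, -⟩, hvx, -⟩
      exact ⟨Ne.symm hvx, Ne.symm hux, hx⟩
    · rintro ⟨hvx, hux, hx⟩
      exact ⟨hx, ⟨Ne.symm hux, hu⟩, Ne.symm hvx, hv⟩
  rw [sum_const, hfilter, card_erase_of_mem (mem_erase.2 ⟨huv.ne.symm, hv⟩),
    card_erase_of_mem hu, nsmul_eq_mul, Nat.cast_sub (by omega), Nat.cast_sub (by omega)]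
  have : (#A : ℝ) - 2 ≠ 0 := by linarith
  field_simp
  ring

end Decomposition

lemma IsIndepSet.insert_of_forall_not_adj {M : SimpleGraph V} {s : Set V} {x : V}
    (hs : M.IsIndepSet s) (hx : ∀ y ∈ s, ¬M.Adj x y) : M.IsIndepSet (insert x s) :=
  Set.pairwise_insert.2 ⟨hs, fun y hy _ => ⟨hx y hy, fun h => hx y hy h.symm⟩⟩

/-- Read `c` as a probability distribution on the sets `S i`: a random `M`-independent subset of
`A` of size at least `#A / 2 - 1` that contains each vertex with probability `1 / 2` and each
`M`-independent pair with probability `1 / 4`. -/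
structure IsHalvingFamily (M : SimpleGraph V) (A : Finset V) {ι : Type*} [Fintype ι]
    (c : ι → ℝ) (S : ι → Finset V) : Prop where
  nonneg : ∀ i, 0 ≤ c i
  subset : ∀ i, S i ⊆ A
  isIndepSet : ∀ i, M.IsIndepSet (S i)
  card_le : ∀ i, #A ≤ 2 * #(S i) + 2
  sum_subset : ∀ s ⊆ A, #s ≤ 2 → M.IsIndepSet s → ∑ i with s ⊆ S i, c i = (1 / 2) ^ #s

/-- A mixture of uniformly random `k l`-subsets of `A`, chosen with probability `p l`, is halving
as soon as its layer sizes `k l` have the first two factorial moments of `Bin(#A, 1/2)`. -/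
lemma isHalvingFamily_layers {M : SimpleGraph V} {A : Finset V} (hA : M.IsIndepSet A) {m : ℕ}
    (k : Fin m → ℕ) (p : Fin m → ℝ) (hp : ∀ l, 0 ≤ p l) (hk : ∀ l, k l ≤ #A ∧ #A ≤ 2 * k l + 2)
    (hmoment : ∀ j ≤ 2, ∑ l, p l * (k l).choose j = (#A).choose j / 2 ^ j) :
    IsHalvingFamily M A (fun i : Σ l, A.powersetCard (k l) => p i.1 / (#A).choose (k i.1))
      (fun i => i.2) where
  nonneg i := div_nonneg (hp _) (Nat.cast_nonneg _)
  subset i := (mem_powersetCard.1 i.2.2).1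
  isIndepSet i := hA.mono (mod_cast (mem_powersetCard.1 i.2.2).1)
  card_le i := by rw [(mem_powersetCard.1 i.2.2).2]; exact (hk i.1).2
  sum_subset s hsA hs _ := by
    have hchooseS : ((#A).choose #s : ℝ) ≠ 0 := by
      exact_mod_cast (Nat.choose_pos (card_le_card hsA)).ne'
    have hlayer : ∀ l, ∑ B : A.powersetCard (k l), (if s ⊆ B then p l / (#A).choose (k l) else 0)
        = p l * (k l).choose #s / (#A).choose #s := by
      intro l
      have hchoose : ((#A).choose (k l) : ℝ) ≠ 0 := by
        exact_mod_cast (Nat.choose_pos (hk l).1).ne'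
      have hcount : (#{B ∈ A.powersetCard (k l) | s ⊆ B} : ℝ) * (#A).choose #s =
          (#A).choose (k l) * (k l).choose #s := by
        exact_mod_cast card_filter_powersetCard_subset_mul hsA (k l)
      rw [sum_coe_sort (A.powersetCard (k l)) fun B => if s ⊆ B then _ else _, ← sum_filter,
        sum_const, nsmul_eq_mul]
      field_simp
      linear_combination p l * hcount
    rw [sum_filter, Fintype.sum_sigma]
    simp only [hlayer]
    rw [← sum_div, hmoment _ hs, div_div_cancel_left' hchooseS, one_div_pow, one_div]

lemma exists_isHalvingFamily_of_isIndepSet {M : SimpleGraph V} {A : Finset V}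
    (hA : M.IsIndepSet A) :
    ∃ (ι : Type u) (_ : Fintype ι) (c : ι → ℝ) (S : ι → Finset V), IsHalvingFamily M A c S := by
  -- layer sizes with mean `#A / 2` and variance `#A / 4`, as for `Bin(#A, 1/2)`
  obtain ⟨h, hh | hh⟩ := Nat.even_or_odd' #A
  · refine ⟨_, _, _, _, isHalvingFamily_layers hA ![h - 1, h, 2 * h]
      ![h / (2 * h + 2), 1 / 2, 1 / (2 * h + 2)] ?_ ?_ ?_⟩
    · intro l; fin_cases l <;> simp <;> positivity
    · intro l; fin_cases l <;> simp <;> omega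
    intro j hj
    rw [hh]
    rcases h with _ | h
    · interval_cases j <;> simp [Fin.sum_univ_three]
      norm_num
    interval_cases j <;> simp [Fin.sum_univ_three, Nat.cast_choose_two] <;> field_simp <;> ring
  · refine ⟨_, _, _, _, isHalvingFamily_layers hA ![h, 2 * h + 1]
      ![(2 * h + 1) / (2 * h + 2), 1 / (2 * h + 2)] ?_ ?_ ?_⟩
    · intro l; fin_cases l <;> simp <;> positivity
    · intro l; fin_cases l <;> simp <;> omega
    intro j hj
    rw [hh]
    interval_cases j <;> simp [Nat.cast_choose_two] <;> field_simp <;> ring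

lemma IsHalvingFamily.insert_pair {M : SimpleGraph V} (hM : ∀ v, (M.neighborSet v).Subsingleton)
    {A : Finset V} {x y : V} (hx : x ∈ A) (hy : y ∈ A) (hxy : M.Adj x y) {ι : Type*} [Fintype ι]
    {c : ι → ℝ} {S : ι → Finset V} (h : IsHalvingFamily M (A \ {x, y}) c S) :
    IsHalvingFamily M A (fun i : ι × Bool => c i.1 / 2)
      (fun i => insert (if i.2 then x else y) (S i.1)) := by
  have hxA' : x ∉ A \ {x, y} := by simp
  have hyA' : y ∉ A \ {x, y} := by simp
  have hcardA : #A = #(A \ {x, y}) + 2 := by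
    rw [card_sdiff_of_subset (insert_subset hx (singleton_subset_iff.2 hy)), card_pair hxy.ne]
    have : 2 ≤ #A := by
      rw [← card_pair hxy.ne]
      exact card_le_card (insert_subset hx (singleton_subset_iff.2 hy))
    omega
  -- `x` and `y` are each other's only `M`-neighbour
  have hout : ∀ b : Bool, ∀ z ∈ A \ {x, y}, ¬M.Adj (if b then x else y) z := by
    rintro (_ | _) z hz hadj
    · exact hxA' (hM y hxy.symm hadj ▸ hz)
    · exact hyA' (hM x hxy hadj ▸ hz)
  have hsum : ∀ t, ¬t ⊆ A \ {x, y} → ∑ i with t ⊆ S i, c i = 0 := fun t ht =>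
    sum_eq_zero fun i hi => absurd ((mem_filter.1 hi).2.trans (h.subset i)) ht
  refine ⟨fun i => div_nonneg (h.nonneg i.1) zero_le_two, fun ⟨i, b⟩ => ?_, fun ⟨i, b⟩ => ?_,
    fun ⟨i, b⟩ => ?_, fun s hsA hs hsM => ?_⟩
  · refine insert_subset ?_ ((h.subset i).trans sdiff_subset)
    cases b <;> assumption
  · rw [coe_insert]
    exact h.isIndepSet i |>.insert_of_forall_not_adj fun z hz => hout b z (h.subset i hz)
  · have hnot : (if b then x else y) ∉ S i := by
      cases b
      · exact fun hyS => hyA' (h.subset i hyS)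
      · exact fun hxS => hxA' (h.subset i hxS)
    rw [card_insert_of_notMem hnot]
    have := h.card_le i
    omega
  rw [sum_filter, Fintype.sum_prod_type]
  simp only [Fintype.sum_bool, if_true, Bool.false_eq_true, if_false, subset_insert_iff]
  rw [sum_add_distrib, ← sum_filter, ← sum_filter, ← sum_div, ← sum_div]
  have hhalf : ∀ z ∈ s, s.erase z ⊆ A \ {x, y} →
      (∑ i with s.erase z ⊆ S i, c i) / 2 = (1 / 2) ^ #s := by
    intro z hz hsub
    rw [h.sum_subset _ hsub ((card_erase_le).trans hs) (hsM.mono (by simp)),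
      card_erase_of_mem hz]
    obtain ⟨m, hm⟩ : ∃ m, #s = m + 1 := ⟨#s - 1, by have := card_pos.2 ⟨z, hz⟩; omega⟩
    rw [hm, Nat.add_sub_cancel, pow_succ]
    ring
  have herase : ∀ z w, w ∉ s → s.erase z ⊆ A \ {z, w} := by
    intro z w hw t ht
    rw [mem_erase] at ht
    simp only [mem_sdiff, mem_insert, mem_singleton, not_or]
    exact ⟨hsA ht.2, ht.1, fun htw => hw (htw ▸ ht.2)⟩
  by_cases hxs : x ∈ s
  · have hys : y ∉ s := fun hys => hsM hxs hys hxy.ne hxy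
    rw [erase_eq_of_notMem hys, hsum s (fun hsub => hxA' (hsub hxs)), zero_div, add_zero]
    exact hhalf x hxs (herase x y hys)
  by_cases hys : y ∈ s
  · rw [erase_eq_of_notMem hxs, hsum s (fun hsub => hyA' (hsub hys)), zero_div, zero_add]
    exact hhalf y hys (pair_comm x y ▸ herase y x hxs)
  have hsA' : s ⊆ A \ {x, y} := by
    simpa only [erase_eq_of_notMem hxs] using herase x y hys
  rw [erase_eq_of_notMem hxs, erase_eq_of_notMem hys, add_halves, h.sum_subset s hsA' hs hsM]

lemma exists_isHalvingFamily {M : SimpleGraph V} (hM : ∀ v, (M.neighborSet v).Subsingleton)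
    (A : Finset V) :
    ∃ (ι : Type u) (_ : Fintype ι) (c : ι → ℝ) (S : ι → Finset V), IsHalvingFamily M A c S := by
  induction A using Finset.strongInduction with
  | H A ih =>
    by_cases hA : M.IsIndepSet A
    · exact exists_isHalvingFamily_of_isIndepSet hA
    obtain ⟨x, hx, y, hy, -, hxy⟩ : ∃ x ∈ A, ∃ y ∈ A, x ≠ y ∧ M.Adj x y := by
      simpa [Set.Pairwise] using hA
    obtain ⟨ι, _, c, S, h⟩ :=
      ih (A \ {x, y}) (sdiff_ssubset (insert_subset hx (singleton_subset_iff.2 hy)) (by simp))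
    exact ⟨ι × Bool, inferInstance, _, _, h.insert_pair hM hx hy hxy⟩

section Cycle

variable {n : ℕ} [NeZero n]

def cycleMatching (e : Fin n ≃ V) (A : Finset V) (c : ℕ) : SimpleGraph V :=
  SimpleGraph.fromRel fun u v => u ∈ A ∧ v ∈ A ∧ e.symm v = e.symm u + 1 ∧ (e.symm u).val % 2 = c

/-- For odd `n` the two cycle edges at `e 0` get the same colour, hence the condition on `A`. -/
lemma cycleMatching_neighborSet_subsingleton (e : Fin n ≃ V) {A : Finset V}
    (hA : Even n ∨ e 0 ∉ A) (c : ℕ) (v : V) :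
    ((cycleMatching e A c).neighborSet v).Subsingleton := by
  have hturn : ∀ z, v ∈ A → (e.symm v).val % 2 = c → e.symm v = e.symm z + 1 →
      (e.symm z).val % 2 = c → False := by
    intro z hvA hv hvz hz
    refine Fin.val_add_one_mod_two_ne (i := e.symm z) (hA.imp_right fun h h0 => h ?_)
      (by rw [← hvz, hv, hz])
    rwa [← h0, ← hvz, Equiv.apply_symm_apply]
  intro y hy z hz
  simp only [mem_neighborSet, cycleMatching, fromRel_adj] at hy hz
  rcases hy with ⟨-, ⟨hvA, -, hyv, hv⟩ | ⟨-, hvA, hvy, hy⟩⟩ <;>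
    rcases hz with ⟨-, ⟨-, -, hzv, hv'⟩ | ⟨-, -, hvz, hz⟩⟩
  · exact e.symm.injective (hyv.trans hzv.symm)
  · exact (hturn z hvA hv hvz hz).elim
  · exact (hturn y hvA hv' hvy hy).elim
  · exact e.symm.injective (add_right_cancel (hvy.symm.trans hvz))

end Cycle

variable [Fintype V] {H : SimpleGraph V} {r : ℕ}

lemma exists_isFracCliqueDecompOn_of_matching {M : SimpleGraph V}
    (hM : ∀ v, (M.neighborSet v).Subsingleton) (hMH : M ≤ Hᶜ) {A : Finset V}
    (h : ∀ B ⊆ A, M.IsIndepSet B → #A ≤ 2 * #B + 2 → ∃ w, H.IsFracCliqueDecompOn r B w) :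
    ∃ w, H.IsFracCliqueDecompOn r A w := by
  obtain ⟨ι, _, c, S, hS⟩ := exists_isHalvingFamily hM A
  refine exists_isFracCliqueDecompOn_of_average univ (fun i => 4 * c i) S
    (fun i _ => mul_nonneg zero_le_four (hS.nonneg i))
    (fun i _ _ => ⟨hS.subset i, h _ (hS.subset i) (hS.isIndepSet i) (hS.card_le i)⟩)
    fun u hu v hv huv => ?_
  have hpair : M.IsIndepSet ({u, v} : Finset V) := by
    rw [coe_pair]
    exact Set.pairwise_pair.2 fun _ => ⟨fun h => (hMH h).2 huv, fun h => (hMH h).2 huv.symm⟩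
  have := hS.sum_subset {u, v} (insert_subset hu (singleton_subset_iff.2 hv))
    card_le_two hpair
  simp only [card_pair huv.ne, insert_subset_iff, singleton_subset_iff] at this
  rw [← mul_sum, this]
  norm_num

theorem exists_isFracCliqueDecompOn_of_two_matchings {M₁ M₂ : SimpleGraph V}
    (hM₁ : ∀ v, (M₁.neighborSet v).Subsingleton) (hM₂ : ∀ v, (M₂.neighborSet v).Subsingleton)
    (hM₁H : M₁ ≤ Hᶜ) (hM₂H : M₂ ≤ Hᶜ) {A : Finset V}
    (hcover : ∀ u ∈ A, ∀ v ∈ A, Hᶜ.Adj u v → M₁.Adj u v ∨ M₂.Adj u v)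
    (hr : 2 ≤ r) (hA : 4 * r + 6 ≤ #A) : ∃ w, H.IsFracCliqueDecompOn r A w := by
  refine exists_isFracCliqueDecompOn_of_matching hM₁ hM₁H fun B hBA hB₁ hAB => ?_
  refine exists_isFracCliqueDecompOn_of_matching hM₂ hM₂H fun C hCB hC₂ hBC => ?_
  refine exists_isFracCliqueDecompOn_of_isClique (fun u hu v hv huv => ?_) hr (by omega)
  by_contra hnadj
  rcases hcover u (hBA (hCB hu)) v (hBA (hCB hv)) ⟨huv, hnadj⟩ with h | h
  · exact hB₁ (hCB hu) (hCB hv) huv h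
  · exact hC₂ hu hv huv h

theorem exists_isFracCliqueDecompOn_of_cycle {n : ℕ} [NeZero n] (e : Fin n ≃ V)
    (hcyc : ∀ u v, Hᶜ.Adj u v → e.symm v = e.symm u + 1 ∨ e.symm u = e.symm v + 1)
    {A : Finset V} (hA : Even n ∨ e 0 ∉ A) (hr : 2 ≤ r) (hAr : 4 * r + 6 ≤ #A) :
    ∃ w, H.IsFracCliqueDecompOn r A w := by
  have hM : ∀ c v, ((cycleMatching e A c ⊓ Hᶜ).neighborSet v).Subsingleton :=
    fun c v _ hy _ hz => cycleMatching_neighborSet_subsingleton e hA c v hy.1 hz.1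
  refine exists_isFracCliqueDecompOn_of_two_matchings (hM 0) (hM 1) inf_le_right inf_le_right
    (fun u hu v hv huv => ?_) hr hAr
  have hcolour : ∀ x y, x ∈ A → y ∈ A → Hᶜ.Adj x y → e.symm y = e.symm x + 1 →
      (cycleMatching e A 0 ⊓ Hᶜ).Adj x y ∨ (cycleMatching e A 1 ⊓ Hᶜ).Adj x y := by
    intro x y hx hy hxy hsucc
    have hadj : (cycleMatching e A ((e.symm x).val % 2)).Adj x y :=
      (fromRel_adj _ _ _).2 ⟨hxy.ne, Or.inl ⟨hx, hy, hsucc, rfl⟩⟩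
    rcases Nat.mod_two_eq_zero_or_one (e.symm x).val with h | h <;> rw [h] at hadj
    · exact Or.inl ⟨hadj, hxy⟩
    · exact Or.inr ⟨hadj, hxy⟩
  rcases hcyc u v huv with h | h
  · exact hcolour u v hu hv huv h
  · exact (hcolour v u hv hu huv.symm h).imp (·.symm) (·.symm)

theorem exists_isFracCliqueDecompOn_univ_of_cycle {n : ℕ} [NeZero n] (e : Fin n ≃ V)
    (hcyc : ∀ u v, Hᶜ.Adj u v → e.symm v = e.symm u + 1 ∨ e.symm u = e.symm v + 1)
    (hr : 2 ≤ r) (hn : 4 * r + 6 ≤ n) : ∃ w, H.IsFracCliqueDecompOn r univ w := by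
  have hcard : #(univ : Finset V) = n := by
    rw [card_univ, ← Fintype.card_congr e, Fintype.card_fin]
  rcases Nat.even_or_odd n with hev | ⟨m, hm⟩
  · exact exists_isFracCliqueDecompOn_of_cycle e hcyc (Or.inl hev) hr (by omega)
  refine exists_isFracCliqueDecompOn_of_forall_erase (by omega) fun v _ => ?_
  -- rotate the cycle so that the deleted vertex `v` sits at position `0`
  let e' := (Equiv.addRight (e.symm v)).trans e
  have hcyc' : ∀ x y, Hᶜ.Adj x y → e'.symm y = e'.symm x + 1 ∨ e'.symm x = e'.symm y + 1 := by
    simpa [e', add_right_comm _ (-e.symm v) 1] using hcyc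
  refine exists_isFracCliqueDecompOn_of_cycle e' hcyc' (Or.inr (by simp [e'])) hr ?_
  rw [card_erase_of_mem (mem_univ v), hcard]
  omega

end SimpleGraph

theorem stmt19_general {V : Type*} [Fintype V] (H : SimpleGraph V) (r n : ℕ)
    (hr : 3 ≤ r) (hn : 4 * r + 6 ≤ n)
    (e : Fin n ≃ V)
    (hcyc : ∀ u v : V, Hᶜ.Adj u v →
      ((e.symm u).val + 1) % n = (e.symm v).val ∨ ((e.symm v).val + 1) % n = (e.symm u).val) :
    fracCliqueDecomp H r := by
  have : NeZero n := ⟨by omega⟩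
  have hsucc : ∀ i j : Fin n, (i.val + 1) % n = j.val ↔ j = i + 1 := fun i j => by
    rw [Fin.ext_iff, Fin.val_add, Fin.val_one', Nat.add_mod_mod, eq_comm]
  obtain ⟨w, hw⟩ := SimpleGraph.exists_isFracCliqueDecompOn_univ_of_cycle e
    (by simpa only [hsucc] using hcyc) (by omega) hn
  exact ⟨w, hw.nonneg, fun u v huv => hw.cliqueWeight_eq_one u (mem_univ u) v (mem_univ v) huv⟩

/-- If the complement of `H` is a subgraph of a Hamilton cycle (given by the cyclic
ordering `e : Fin n ≃ V`) and `n ≥ 4r + 6`, then `H` has a fractional `K_r`-decomposition. -/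
theorem stmt19 {V : Type*} [Fintype V] (H : SimpleGraph V) (r n : ℕ)
    (hr : 3 ≤ r) (hn : 4 * r + 6 ≤ n) (hcard : Fintype.card V = n)
    (e : Fin n ≃ V)
    (hcyc : ∀ u v : V, Hᶜ.Adj u v →
      ((e.symm u).val + 1) % n = (e.symm v).val ∨ ((e.symm v).val + 1) % n = (e.symm u).val) :
    fracCliqueDecomp H r :=
  stmt19_general H r n hr hn e hcyc
end
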